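/- Let (Ω, F, μ) be a measure space, T > 0, r ∈ [1,∞), q ∈ (1,∞), and let X : Ω × (0,T) → ℝ be jointly measurable with ‖ω ↦ ‖X(ω,·)‖_{L^∞(0,T)}‖_{L^r(Ω,μ)} < ∞. Then for every ε > 0 and every t ∈ [0,T], ‖ω ↦ ‖X(ω,·)‖_{L^q(0,t)}‖_{L^r(Ω,μ)} ≤ ε ‖ω ↦ ‖X(ω,·)‖_{L^∞(0,t)}‖_{L^r(Ω,μ)} + ε^{1−q} (1/q) (1 − 1/q)^{q−1} ∫₀^t ‖ω ↦ ‖X(ω,·)‖_{L^∞(0,s)}‖_{L^r(Ω,μ)} ds. -/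

import Mathlib

/-!
Fix `ω` and write `N s = ‖X(ω,·)‖_{L^∞(0,s)}`. This is monotone in `s`, hence continuous off a
countable set, which gives `|X(ω,s)| ≤ N s` for a.e. `s`. Therefore
`‖X(ω,·)‖_{L^q(0,t)} ≤ N(t)^{1-1/q} (∫₀ᵗ N)^{1/q}`, and Young's inequality with `ε` splits the
right-hand side into the two terms of the claim. Taking `L^r(Ω)`-norms, Minkowski's inequality
for sums and for integrals concludes; the integral form needs Tonelli, so `μ` is first restricted to
the σ-finite set where `N(t) > 0`, off which the left-hand side vanishes.
-/

open MeasureTheory Set Function Filter Topology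
open scoped ENNReal NNReal

namespace ENNReal

theorem rpow_sub_one_mul_self (x : ℝ≥0∞) {r : ℝ} (hr : 1 ≤ r) : x ^ (r - 1) * x = x ^ r := by
  conv_rhs => rw [← sub_add_cancel r 1]
  rw [rpow_add_of_nonneg _ _ (sub_nonneg.2 hr) zero_le_one, rpow_one]

theorem young_inequality_eps {q ε : ℝ} (hq : 1 < q) (hε : 0 < ε) (a b : ℝ≥0∞) :
    a ^ (1 - 1 / q) * b ^ (1 / q) ≤ ENNReal.ofReal ε * a +
      ENNReal.ofReal (ε ^ (1 - q) * (1 / q) * (1 - 1 / q) ^ (q - 1)) * b := by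
  set P := q.conjExponent
  have hPq : P.HolderConjugate q := (Real.HolderConjugate.conjExponent hq).symm
  have hP : 0 < P := hPq.pos
  have hq0 : 0 < q := hPq.symm.pos
  have hPε : 0 < P * ε := _root_.mul_pos hP hε
  have h1P : 1 - 1 / q = 1 / P := by rw [one_div, one_div, hPq.symm.one_sub_inv]
  -- Young's inequality for `(c a) ^ (1/P)` and `(d b) ^ (1/q)`, where `c ^ (1/P) * d ^ (1/q) = 1`.
  set c := ENNReal.ofReal (P * ε) with hc_def
  set d := ENNReal.ofReal ((P * ε) ^ (1 - q)) with hd_def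
  have hcd : c ^ (1 / P) * d ^ (1 / q) = 1 := by
    rw [ofReal_rpow_of_pos hPε, ofReal_rpow_of_pos (Real.rpow_pos_of_pos hPε _),
      ← Real.rpow_mul hPε.le, ← ofReal_mul (by positivity), ← Real.rpow_add hPε,
      show 1 / P + (1 - q) * (1 / q) = 0 by rw [← h1P]; field_simp; ring,
      Real.rpow_zero, ofReal_one]
  have hc : c * a / ENNReal.ofReal P = ENNReal.ofReal ε * a := by
    rw [hc_def, ofReal_mul hP.le, mul_comm (ENNReal.ofReal P), mul_right_comm,
      ENNReal.mul_div_cancel_right (by simpa using hP) ofReal_ne_top]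
  have hd : d * b / ENNReal.ofReal q =
      ENNReal.ofReal (ε ^ (1 - q) * (1 / q) * (1 - 1 / q) ^ (q - 1)) * b := by
    rw [hd_def, div_eq_mul_inv, mul_right_comm, ← div_eq_mul_inv, ← ofReal_div_of_pos hq0]
    have hP_inv : P = (1 - 1 / q)⁻¹ := by rw [h1P, one_div, inv_inv]
    have h1q : 0 < 1 - 1 / q := by rw [h1P]; positivity
    rw [Real.mul_rpow hP.le hε.le, hP_inv, Real.inv_rpow h1q.le, ← Real.rpow_neg h1q.le, neg_sub]
    ring_nf
  calc a ^ (1 - 1 / q) * b ^ (1 / q) = (c * a) ^ (1 / P) * (d * b) ^ (1 / q) := by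
        rw [mul_rpow_of_nonneg _ _ (by positivity), mul_rpow_of_nonneg _ _ (by positivity),
          mul_mul_mul_comm, hcd, one_mul, h1P]
    _ ≤ _ := young_inequality _ _ hPq
    _ = _ := by rw [← rpow_mul, ← rpow_mul, one_div_mul_cancel hP.ne', one_div_mul_cancel hq0.ne',
          rpow_one, rpow_one, hc, hd]

variable {Ω α : Type*} [MeasurableSpace Ω] [MeasurableSpace α]

theorem lintegral_Lp_const_mul (μ : Measure Ω) {r : ℝ} (hr : 0 < r) {c : ℝ≥0∞} (hc : c ≠ ∞)
    (h : Ω → ℝ≥0∞) :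
    (∫⁻ ω, (c * h ω) ^ r ∂μ) ^ (1 / r) = c * (∫⁻ ω, h ω ^ r ∂μ) ^ (1 / r) := by
  simp_rw [mul_rpow_of_nonneg _ _ hr.le]
  rw [lintegral_const_mul' _ _ (rpow_ne_top_of_nonneg hr.le hc),
    mul_rpow_of_nonneg _ _ (by positivity), ← rpow_mul, mul_one_div_cancel hr.ne', rpow_one]

theorem lintegral_Lp_lintegral_le (μ : Measure Ω) [SFinite μ] (ν : Measure α) [SFinite ν]
    {r : ℝ} (hr : 1 ≤ r) {f : Ω → α → ℝ≥0∞} (hf : Measurable (uncurry f))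
    (hfin : ∫⁻ ω, (∫⁻ σ, f ω σ ∂ν) ^ r ∂μ ≠ ∞) :
    (∫⁻ ω, (∫⁻ σ, f ω σ ∂ν) ^ r ∂μ) ^ (1 / r) ≤ ∫⁻ σ, (∫⁻ ω, f ω σ ^ r ∂μ) ^ (1 / r) ∂ν := by
  obtain rfl | hr1 := hr.eq_or_lt
  · simpa using (lintegral_lintegral_swap hf.aemeasurable).le
  set r' := r.conjExponent
  have hrr' : r'.HolderConjugate r := (Real.HolderConjugate.conjExponent hr1).symm
  set K := fun ω => ∫⁻ σ, f ω σ ∂ν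
  set A := ∫⁻ ω, K ω ^ r ∂μ
  obtain hA0 | hA0 := eq_or_ne A 0
  · simp [hA0, hrr'.symm.pos]
  have hK : Measurable K := hf.lintegral_prod_right'
  have hA' : A ^ (1 / r') ≠ ∞ := rpow_ne_top_of_nonneg hrr'.one_div_pos.le hfin
  -- Hölder's inequality applied to `A = ∫ K ^ (r - 1) * K`, after exchanging the integrals.
  have key : A ≤ A ^ (1 / r') * ∫⁻ σ, (∫⁻ ω, f ω σ ^ r ∂μ) ^ (1 / r) ∂ν := calc
    A = ∫⁻ ω, ∫⁻ σ, K ω ^ (r - 1) * f ω σ ∂ν ∂μ := by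
      refine lintegral_congr fun ω => ?_
      rw [lintegral_const_mul _ hf.of_uncurry_left, rpow_sub_one_mul_self _ hr]
    _ = ∫⁻ σ, ∫⁻ ω, K ω ^ (r - 1) * f ω σ ∂μ ∂ν :=
      lintegral_lintegral_swap ((hK.comp measurable_fst).pow_const _ |>.mul hf).aemeasurable
    _ ≤ ∫⁻ σ, A ^ (1 / r') * (∫⁻ ω, f ω σ ^ r ∂μ) ^ (1 / r) ∂ν := by
      refine lintegral_mono fun σ => (lintegral_mul_le_Lp_mul_Lq μ hrr'
        (hK.pow_const _).aemeasurable hf.of_uncurry_right.aemeasurable).trans_eq ?_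
      simp_rw [← rpow_mul, hrr'.symm.sub_one_mul_conj]
      rfl
    _ = A ^ (1 / r') * ∫⁻ σ, (∫⁻ ω, f ω σ ^ r ∂μ) ^ (1 / r) ∂ν := lintegral_const_mul' _ _ hA'
  have hsplit : A = A ^ (1 / r') * A ^ (1 / r) := by
    rw [← rpow_add _ _ hA0 hfin, one_div, one_div, hrr'.inv_add_inv_eq_one, rpow_one]
  exact (ENNReal.mul_le_mul_iff_right (rpow_pos (pos_iff_ne_zero.2 hA0) hfin).ne' hA').mp
    (hsplit.symm.trans_le key)

end ENNReal

theorem Measurable.essSup_prod_right {Ω α : Type*} [MeasurableSpace Ω] [MeasurableSpace α]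
    {ν : Measure α} [SFinite ν] {f : Ω × α → ℝ≥0∞} (hf : Measurable f) :
    Measurable fun ω => essSup (fun σ => f (ω, σ)) ν := by
  have hrat : ∀ ω, essSup (fun σ => f (ω, σ)) ν = ⨅ c : ℚ,
      if ν (Prod.mk ω ⁻¹' {z | ((c : ℝ).toNNReal : ℝ≥0∞) < f z}) = 0
        then ((c : ℝ).toNNReal : ℝ≥0∞) else ∞ := by
    intro ω
    refine le_antisymm (le_iInf fun c => ?_) (le_of_forall_gt fun b hb => ?_)
    · split_ifs with hc
      · refine essSup_le_of_ae_le _ (ae_iff.mpr ?_)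
        simpa only [not_le, preimage_ofPred_eq] using hc
      · exact le_top
    · obtain ⟨c, -, hlt, hcb⟩ := ENNReal.lt_iff_exists_rat_btwn.mp hb
      have hnull : ν (Prod.mk ω ⁻¹' {z | ((c : ℝ).toNNReal : ℝ≥0∞) < f z}) = 0 :=
        measure_mono_null (fun σ hσ => hlt.trans hσ) (meas_essSup_lt (f := fun σ => f (ω, σ)))
      exact (iInf_le _ c).trans_lt (by rwa [if_pos hnull])
  simp_rw [hrat]
  exact .iInf fun c => .ite ((measurable_measure_prodMk_left (measurableSet_lt measurable_const hf))
    (measurableSet_singleton 0)) measurable_const measurable_const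

theorem sigmaFinite_restrict_setOf_pos {Ω : Type*} [MeasurableSpace Ω] {μ : Measure Ω}
    {f : Ω → ℝ≥0∞} (hf : Measurable f) (hfin : ∫⁻ ω, f ω ∂μ ≠ ∞) :
    SigmaFinite (μ.restrict {ω | 0 < f ω}) := by
  set A : ℕ → Set Ω := fun n => {ω | ((n : ℝ≥0∞) + 1)⁻¹ ≤ f ω}
  refine Measure.sigmaFinite_of_countable (S := insert {ω | 0 < f ω}ᶜ (range A))
    ((countable_range A).insert _) ?_ ?_
  · rintro s (rfl | ⟨n, rfl⟩)
    · rw [Measure.restrict_apply (measurableSet_lt measurable_const hf).compl, compl_inter_self,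
        measure_empty]
      exact ENNReal.zero_lt_top
    · refine (Measure.restrict_apply_le _ _).trans_lt ?_
      exact (meas_ge_le_lintegral_div hf.aemeasurable (by simp) (by simp)).trans_lt
        (ENNReal.div_lt_top hfin (by simp))
  · refine eq_univ_of_forall fun ω => ?_
    rcases eq_or_ne (f ω) 0 with h0 | h0
    · exact mem_sUnion_of_mem (by simp [h0]) (mem_insert _ _)
    · obtain ⟨n, hn⟩ := ENNReal.exists_inv_nat_lt h0
      refine mem_sUnion_of_mem ?_ (mem_insert_of_mem _ ⟨n, rfl⟩)
      exact (ENNReal.inv_le_inv.mpr le_self_add).trans hn.le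

theorem eLpNorm_le_eLpNorm_top_rpow_mul_lintegral_rpow {α E : Type*} [MeasurableSpace α]
    [ENorm E] {ν : Measure α} {f : α → E} {g : α → ℝ≥0∞} (hg : AEMeasurable g ν)
    (hfg : ∀ᵐ x ∂ν, ‖f x‖ₑ ≤ g x) {q : ℝ} (hq : 1 ≤ q) :
    eLpNorm f (ENNReal.ofReal q) ν ≤ eLpNorm f ∞ ν ^ (1 - 1 / q) * (∫⁻ x, g x ∂ν) ^ (1 / q) := by
  have hq0 : 0 < q := zero_lt_one.trans_le hq
  rw [eLpNorm_eq_lintegral_rpow_enorm_toReal (by simpa using hq0) ENNReal.ofReal_ne_top,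
    ENNReal.toReal_ofReal hq0.le]
  calc (∫⁻ x, ‖f x‖ₑ ^ q ∂ν) ^ (1 / q)
      ≤ (∫⁻ x, eLpNorm f ∞ ν ^ (q - 1) * g x ∂ν) ^ (1 / q) := by
        gcongr ?_ ^ _
        refine lintegral_mono_ae ?_
        filter_upwards [ae_le_eLpNormEssSup (f := f) (μ := ν), hfg] with x hM hg
        rw [← eLpNorm_exponent_top] at hM
        rw [← ENNReal.rpow_sub_one_mul_self _ hq]
        gcongr
    _ = eLpNorm f ∞ ν ^ (1 - 1 / q) * (∫⁻ x, g x ∂ν) ^ (1 / q) := by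
        rw [lintegral_const_mul'' _ hg, ENNReal.mul_rpow_of_nonneg _ _ (by positivity),
          ← ENNReal.rpow_mul]
        congr 2
        field_simp

section RunningEssSup

variable {E : Type*} [TopologicalSpace E] [ContinuousENorm E] (μ : Measure ℝ) (f : ℝ → E) (a : ℝ)

theorem monotone_eLpNorm_restrict_Ioo (p : ℝ≥0∞) :
    Monotone fun s => eLpNorm f p (μ.restrict (Ioo a s)) := by
  intro s t hst
  exact eLpNorm_mono_measure f (Measure.restrict_mono (Ioo_subset_Ioo le_rfl hst) le_rfl)

theorem ae_forall_rat_enorm_le_eLpNorm_top_restrict_Ioo :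
    ∀ᵐ σ ∂μ, ∀ p : ℚ, σ ∈ Ioo a (p : ℝ) → ‖f σ‖ₑ ≤ eLpNorm f ∞ (μ.restrict (Ioo a p)) :=
  ae_all_iff.mpr fun _ => (ae_restrict_iff' measurableSet_Ioo).mp ae_le_eLpNormEssSup

theorem eLpNorm_top_restrict_Ioo_eq_iSup_rat (s : ℝ) :
    eLpNorm f ∞ (μ.restrict (Ioo a s)) =
      ⨆ p : ℚ, if (p : ℝ) < s then eLpNorm f ∞ (μ.restrict (Ioo a p)) else 0 := by
  refine le_antisymm (eLpNormEssSup_le_of_ae_enorm_bound ?_) (iSup_le fun p => ?_)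
  · filter_upwards [ae_restrict_of_ae (ae_forall_rat_enorm_le_eLpNorm_top_restrict_Ioo μ f a),
      ae_restrict_mem measurableSet_Ioo] with σ hσ hσs
    obtain ⟨p, hσp, hps⟩ := exists_rat_btwn hσs.2
    exact (hσ p ⟨hσs.1, hσp⟩).trans (le_iSup_of_le p (by rw [if_pos hps]))
  · split_ifs with hps
    · exact monotone_eLpNorm_restrict_Ioo μ f a ∞ hps.le
    · exact zero_le

-- Holds at every point where the monotone function `s ↦ ‖f‖_{L^∞(a,s)}` is continuous,
-- i.e. off a countable set.
theorem ae_enorm_le_eLpNorm_top_restrict_Ioo [NullSingletonClass μ] :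
    ∀ᵐ σ ∂μ, a < σ → ‖f σ‖ₑ ≤ eLpNorm f ∞ (μ.restrict (Ioo a σ)) := by
  have hN := monotone_eLpNorm_restrict_Ioo μ f a ∞
  filter_upwards [ae_forall_rat_enorm_le_eLpNorm_top_restrict_Ioo μ f a,
    measure_eq_zero_iff_ae_notMem.mp (hN.countable_not_continuousAt.measure_zero μ)]
    with σ hσ hcont haσ
  refine ge_of_tendsto ((not_not.mp hcont).tendsto.mono_left nhdsWithin_le_nhds)
    (eventually_nhdsWithin_of_forall (s := Ioi σ) fun x hx => ?_)
  obtain ⟨p, hσp, hpx⟩ := exists_rat_btwn (mem_Ioi.mp hx)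
  exact (hσ p ⟨haσ, hσp⟩).trans (hN hpx.le)

end RunningEssSup

theorem eLpNorm_restrict_Ioo_le_eps {E : Type*} [TopologicalSpace E] [ContinuousENorm E]
    (ν : Measure ℝ) [NullSingletonClass ν] (f : ℝ → E) (a t : ℝ) {q ε : ℝ} (hq : 1 < q)
    (hε : 0 < ε) :
    eLpNorm f (ENNReal.ofReal q) (ν.restrict (Ioo a t)) ≤
      ENNReal.ofReal ε * eLpNorm f ∞ (ν.restrict (Ioo a t)) +
        ENNReal.ofReal (ε ^ (1 - q) * (1 / q) * (1 - 1 / q) ^ (q - 1)) *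
          ∫⁻ s in Ioo a t, eLpNorm f ∞ (ν.restrict (Ioo a s)) ∂ν := by
  have hbound : ∀ᵐ s ∂ν.restrict (Ioo a t), ‖f s‖ₑ ≤ eLpNorm f ∞ (ν.restrict (Ioo a s)) :=
    (ae_restrict_iff' measurableSet_Ioo).mpr
      ((ae_enorm_le_eLpNorm_top_restrict_Ioo ν f a).mono fun _ h hs => h hs.1)
  exact (eLpNorm_le_eLpNorm_top_rpow_mul_lintegral_rpow
    (monotone_eLpNorm_restrict_Ioo ν f a ∞).measurable.aemeasurable hbound hq.le).trans
    (ENNReal.young_inequality_eps hq hε _ _)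

section Measurability

variable {Ω E : Type*} [MeasurableSpace Ω] [MeasurableSpace E] [TopologicalSpace E]
  [ContinuousENorm E] [OpensMeasurableSpace E] {X : Ω → ℝ → E} (hX : Measurable (uncurry X))
  (ν : Measure ℝ) [SFinite ν] (a : ℝ)
include hX

theorem measurable_eLpNorm_top_restrict_Ioo (s : ℝ) :
    Measurable fun ω => eLpNorm (X ω) ∞ (ν.restrict (Ioo a s)) := by
  simp_rw [eLpNorm_exponent_top, eLpNormEssSup_eq_essSup_enorm]
  exact hX.enorm.essSup_prod_right

theorem measurable_uncurry_eLpNorm_top_restrict_Ioo :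
    Measurable fun z : Ω × ℝ => eLpNorm (X z.1) ∞ (ν.restrict (Ioo a z.2)) := by
  rw [funext fun z : Ω × ℝ => eLpNorm_top_restrict_Ioo_eq_iSup_rat ν (X z.1) a z.2]
  exact .iSup fun p => .ite (measurable_snd measurableSet_Ioi)
    ((measurable_eLpNorm_top_restrict_Ioo hX ν a p).comp measurable_fst) measurable_const

end Measurability

section MixedNorm

variable {Ω E : Type*} [MeasurableSpace Ω] [MeasurableSpace E] [TopologicalSpace E]
  [ContinuousENorm E] [OpensMeasurableSpace E] {X : Ω → ℝ → E} (ν : Measure ℝ) [SFinite ν]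
  [NullSingletonClass ν] [IsLocallyFiniteMeasure ν] (a : ℝ) {r q ε t : ℝ}

theorem lintegral_rpow_eLpNorm_restrict_Ioo_le_of_sFinite (μ : Measure Ω) [SFinite μ]
    (hX : Measurable (uncurry X)) (hr : 1 ≤ r) (hq : 1 < q) (hε : 0 < ε)
    (hfin : ∫⁻ ω, eLpNorm (X ω) ∞ (ν.restrict (Ioo a t)) ^ r ∂μ ≠ ∞) :
    (∫⁻ ω, eLpNorm (X ω) (ENNReal.ofReal q) (ν.restrict (Ioo a t)) ^ r ∂μ) ^ (1 / r) ≤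
      ENNReal.ofReal ε * (∫⁻ ω, eLpNorm (X ω) ∞ (ν.restrict (Ioo a t)) ^ r ∂μ) ^ (1 / r) +
        ENNReal.ofReal (ε ^ (1 - q) * (1 / q) * (1 - 1 / q) ^ (q - 1)) *
          ∫⁻ s in Ioo a t, (∫⁻ ω, eLpNorm (X ω) ∞ (ν.restrict (Ioo a s)) ^ r ∂μ) ^ (1 / r) ∂ν := by
  have hr0 : 0 < r := zero_lt_one.trans_le hr
  set C := ENNReal.ofReal (ε ^ (1 - q) * (1 / q) * (1 - 1 / q) ^ (q - 1))
  set N : Ω → ℝ → ℝ≥0∞ := fun ω s => eLpNorm (X ω) ∞ (ν.restrict (Ioo a s))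
  set J : Ω → ℝ≥0∞ := fun ω => ∫⁻ s in Ioo a t, N ω s ∂ν
  have hN : Measurable (uncurry N) := measurable_uncurry_eLpNorm_top_restrict_Ioo hX ν a
  have hJ : ∀ ω, J ω ≤ ν (Ioo a t) * N ω t := fun ω =>
    (setLIntegral_mono' measurableSet_Ioo fun s hs =>
      monotone_eLpNorm_restrict_Ioo ν (X ω) a ∞ hs.2.le).trans_eq
      ((setLIntegral_const _ _).trans (mul_comm _ _))
  have hνt : ν (Ioo a t) ^ r ≠ ∞ := ENNReal.rpow_ne_top_of_nonneg hr0.le measure_Ioo_lt_top.ne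
  have hJfin : ∫⁻ ω, J ω ^ r ∂μ ≠ ∞ := by
    refine ne_top_of_le_ne_top ?_ (lintegral_mono fun ω => ENNReal.rpow_le_rpow (hJ ω) hr0.le)
    simp_rw [ENNReal.mul_rpow_of_nonneg _ _ hr0.le]
    rw [lintegral_const_mul' _ _ hνt]
    exact ENNReal.mul_ne_top hνt hfin
  calc (∫⁻ ω, eLpNorm (X ω) (ENNReal.ofReal q) (ν.restrict (Ioo a t)) ^ r ∂μ) ^ (1 / r)
      ≤ (∫⁻ ω, (ENNReal.ofReal ε * N ω t + C * J ω) ^ r ∂μ) ^ (1 / r) := by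
        gcongr with ω
        exact eLpNorm_restrict_Ioo_le_eps ν (X ω) a t hq hε
    _ ≤ ENNReal.ofReal ε * (∫⁻ ω, N ω t ^ r ∂μ) ^ (1 / r) + C * (∫⁻ ω, J ω ^ r ∂μ) ^ (1 / r) := by
        rw [← ENNReal.lintegral_Lp_const_mul μ hr0 ENNReal.ofReal_ne_top,
          ← ENNReal.lintegral_Lp_const_mul μ hr0 ENNReal.ofReal_ne_top]
        exact ENNReal.lintegral_Lp_add_le
          (measurable_const.mul (hN.comp (measurable_id.prodMk measurable_const))).aemeasurable
          (measurable_const.mul hN.lintegral_prod_right').aemeasurable hr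
    _ ≤ _ := by
        gcongr
        exact ENNReal.lintegral_Lp_lintegral_le μ (ν.restrict (Ioo a t)) hr hN hJfin

theorem lintegral_rpow_eLpNorm_restrict_Ioo_le (μ : Measure Ω)
    (hX : Measurable (uncurry X)) (hr : 1 ≤ r) (hq : 1 < q) (hε : 0 < ε)
    (hfin : ∫⁻ ω, eLpNorm (X ω) ∞ (ν.restrict (Ioo a t)) ^ r ∂μ ≠ ∞) :
    (∫⁻ ω, eLpNorm (X ω) (ENNReal.ofReal q) (ν.restrict (Ioo a t)) ^ r ∂μ) ^ (1 / r) ≤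
      ENNReal.ofReal ε * (∫⁻ ω, eLpNorm (X ω) ∞ (ν.restrict (Ioo a t)) ^ r ∂μ) ^ (1 / r) +
        ENNReal.ofReal (ε ^ (1 - q) * (1 / q) * (1 - 1 / q) ^ (q - 1)) *
          ∫⁻ s in Ioo a t, (∫⁻ ω, eLpNorm (X ω) ∞ (ν.restrict (Ioo a s)) ^ r ∂μ) ^ (1 / r) ∂ν := by
  have hr0 : 0 < r := zero_lt_one.trans_le hr
  set S := {ω | 0 < eLpNorm (X ω) ∞ (ν.restrict (Ioo a t)) ^ r}
  have : SigmaFinite (μ.restrict S) := sigmaFinite_restrict_setOf_pos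
    ((measurable_eLpNorm_top_restrict_Ioo hX ν a t).pow_const r) hfin
  have hsupp :
      support (fun ω => eLpNorm (X ω) (ENNReal.ofReal q) (ν.restrict (Ioo a t)) ^ r) ⊆ S := by
    intro ω hω
    by_contra hωS
    have hzero : eLpNorm (X ω) ∞ (ν.restrict (Ioo a t)) = 0 :=
      (ENNReal.rpow_eq_zero_iff_of_pos hr0).mp (not_lt.mp hωS |>.antisymm zero_le)
    have hXω : ∀ᵐ s ∂ν.restrict (Ioo a t), ‖X ω s‖ₑ ≤ ‖(0 : ℝ≥0∞)‖ₑ := by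
      rw [eLpNorm_exponent_top] at hzero
      simpa [hzero] using ae_le_eLpNormEssSup (f := X ω) (μ := ν.restrict (Ioo a t))
    have hq_zero := (eLpNorm_mono_enorm_ae (p := ENNReal.ofReal q) hXω).trans_eq eLpNorm_zero
    exact hω (by simp [nonpos_iff_eq_zero.mp hq_zero, ENNReal.zero_rpow_of_pos hr0])
  rw [← setLIntegral_eq_of_support_subset hsupp]
  refine (lintegral_rpow_eLpNorm_restrict_Ioo_le_of_sFinite ν a (μ.restrict S) hX hr hq hε
    (ne_top_of_le_ne_top hfin (lintegral_mono' Measure.restrict_le_self le_rfl))).trans ?_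
  gcongr
  all_goals exact Measure.restrict_le_self

end MixedNorm

theorem stmt5_general {Ω : Type*} [MeasurableSpace Ω] (μ : Measure Ω)
    (T : ℝ) (r q : ℝ) (hr : 1 ≤ r) (hq : 1 < q)
    (X : Ω → ℝ → ℝ) (hX : Measurable (Function.uncurry X))
    (LrLp : ℝ≥0∞ → ℝ → ℝ≥0∞)
    (hLrLp : ∀ (p : ℝ≥0∞) (s : ℝ), LrLp p s =
      (∫⁻ ω, (eLpNorm (fun τ => X ω τ) p (volume.restrict (Set.Ioo 0 s))) ^ r ∂μ)
        ^ (1 / r))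
    (hfin : LrLp ∞ T < ∞) :
    ∀ ε > 0, ∀ t ∈ Set.Icc (0:ℝ) T,
      LrLp (ENNReal.ofReal q) t ≤
        ENNReal.ofReal ε * LrLp ∞ t +
          ENNReal.ofReal (ε ^ (1 - q) * (1 / q) * (1 - 1 / q) ^ (q - 1)) *
            ∫⁻ s in Set.Ioo (0:ℝ) t, LrLp ∞ s := by
  intro ε hε t ht
  simp only [hLrLp] at hfin ⊢
  refine lintegral_rpow_eLpNorm_restrict_Ioo_le volume 0 μ hX hr hq hε (ne_top_of_le_ne_top
    ((ENNReal.rpow_lt_top_iff_of_pos (by positivity)).mp hfin).ne (lintegral_mono fun ω => ?_))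
  exact ENNReal.rpow_le_rpow (monotone_eLpNorm_restrict_Ioo volume (X ω) 0 ∞ ht.2) (by positivity)

/-- Interpolation lemma for mixed `L^r(Ω, L^q(0,t))` norms: if
`X : Ω × (0,T) → ℝ` is jointly measurable with
`‖ω ↦ ‖X(ω,·)‖_{L^∞(0,T)}‖_{L^r(Ω)} < ∞`, then for all `ε > 0` and `t ∈ [0,T]`,
`‖‖X‖_{L^q(0,t)}‖_{L^r(Ω)} ≤ ε ‖‖X‖_{L^∞(0,t)}‖_{L^r(Ω)}
  + ε^{1−q} (1/q) (1−1/q)^{q−1} ∫₀ᵗ ‖‖X‖_{L^∞(0,s)}‖_{L^r(Ω)} ds`. -/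
theorem stmt5 {Ω : Type*} [MeasurableSpace Ω] (μ : Measure Ω)
    (T : ℝ) (hT : 0 < T) (r q : ℝ) (hr : 1 ≤ r) (hq : 1 < q)
    (X : Ω → ℝ → ℝ) (hX : Measurable (Function.uncurry X))
    (LrLp : ℝ≥0∞ → ℝ → ℝ≥0∞)
    (hLrLp : ∀ (p : ℝ≥0∞) (s : ℝ), LrLp p s =
      (∫⁻ ω, (eLpNorm (fun τ => X ω τ) p (volume.restrict (Set.Ioo 0 s))) ^ r ∂μ)
        ^ (1 / r))
    (hfin : LrLp ∞ T < ∞) :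
    ∀ ε > 0, ∀ t ∈ Set.Icc (0:ℝ) T,
      LrLp (ENNReal.ofReal q) t ≤
        ENNReal.ofReal ε * LrLp ∞ t +
          ENNReal.ofReal (ε ^ (1 - q) * (1 / q) * (1 - 1 / q) ^ (q - 1)) *
            ∫⁻ s in Set.Ioo (0:ℝ) t, LrLp ∞ s :=
  stmt5_general μ T r q hr hq X hX LrLp hLrLp hfin
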